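/- arXiv:2205.02403 — 7 statements merged into one kernel-verified Lean document; each statement's English description precedes it below -/
import Mathlib

section
/- Let G = N ⋊ H be a semidirect product of groups, q ∈ G, and φ : E ⊆ N → H. Define E_q = {n ∈ N : π_N(q⁻¹n) ∈ E} and φ_q : E_q → H by φ_q(n) = (π_H(q⁻¹n))⁻¹ · φ(π_N(q⁻¹n)). Then the left translation of the intrinsic graph of φ equals the intrinsic graph of φ_q, i.e. q · Γ_φ = Γ_{φ_q}, where Γ_φ = {n · φ(n) : n ∈ E}. -/
/-- left translation of an intrinsic graph is an intrinsic graph,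
`q · Γ_φ = Γ_{φ_q}` with `φ_q(n) = (π_H(q⁻¹n))⁻¹ · φ(π_N(q⁻¹n))` on
`E_q = {n ∈ N : π_N(q⁻¹n) ∈ E}`. -/
theorem stmt_0 {G : Type*} [Group G] [MetricSpace G]
    (N H : Subgroup G) (hNnormal : N.Normal)
    (πN πH : G → G)
    (hdec : ∀ g : G, πN g ∈ N ∧ πH g ∈ H ∧ πN g * πH g = g)
    (huniq : ∀ n h : G, n ∈ N → h ∈ H → πN (n * h) = n ∧ πH (n * h) = h)
    (q : G) (E : Set G) (hE : E ⊆ (N : Set G))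
    (φ : G → G) (hφ : ∀ n ∈ E, φ n ∈ H) :
    (fun x => q * x) '' {x | ∃ n ∈ E, x = n * φ n}
      = {x | ∃ n : G, n ∈ (N : Set G) ∧ πN (q⁻¹ * n) ∈ E ∧
          x = n * ((πH (q⁻¹ * n))⁻¹ * φ (πN (q⁻¹ * n)))} := by
  ext x
  simp only [Set.mem_image, Set.mem_setOf_eq]
  constructor
  · rintro ⟨y, ⟨n, hnE, rfl⟩, rfl⟩
    set m := πN (q * (n * φ n)) with hm
    have hx := (hdec (q * (n * φ n))).2.2
    have hq : q⁻¹ * m = n * (φ n * (πH (q * (n * φ n)))⁻¹) := by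
      have h1 : m = q * (n * φ n) * (πH (q * (n * φ n)))⁻¹ := by
        rw [hm]
        nth_rewrite 2 [← hx]
        group
      rw [h1]; group
    have hmemH : φ n * (πH (q * (n * φ n)))⁻¹ ∈ H :=
      mul_mem (hφ n hnE) (inv_mem (hdec _).2.1)
    obtain ⟨hπN, hπH⟩ := huniq n _ (hE hnE) hmemH
    refine ⟨m, (hdec _).1, ?_, ?_⟩
    · rw [hq, hπN]; exact hnE
    · rw [hq, hπN, hπH, mul_inv_rev, inv_inv, inv_mul_cancel_right, hm]
      exact hx.symm
  · rintro ⟨m, hmN, hnE, rfl⟩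
    refine ⟨q⁻¹ * (m * ((πH (q⁻¹ * m))⁻¹ * φ (πN (q⁻¹ * m)))),
      ⟨πN (q⁻¹ * m), hnE, ?_⟩, by group⟩
    have h := (hdec (q⁻¹ * m)).2.2
    have : q⁻¹ * (m * ((πH (q⁻¹ * m))⁻¹ * φ (πN (q⁻¹ * m))))
        = (πN (q⁻¹ * m) * πH (q⁻¹ * m)) * ((πH (q⁻¹ * m))⁻¹ * φ (πN (q⁻¹ * m))) := by
      rw [h]; group
    rw [this]; group
end

section
/- Let (G = N ⋊ H, d) be a metric group. For every α ≥ 0, the left cone is contained in an enlarged right cone and vice versa: C^ℓ_{N,H}(α) ⊆ C^r_{N,H}(α+2) and C^r_{N,H}(α) ⊆ C^ℓ_{N,H}(α+2), where C^ℓ_{N,H}(α) = {p : d(1, π_N(p)) ≤ α d(1, π_H(p))} (decomposition p = nh, n ∈ N, h ∈ H) and C^r_{N,H}(α) = {p : d(1, m) ≤ α d(1, ℓ)} for the decomposition p = ℓm, ℓ ∈ H, m ∈ N. -/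
lemma conj_dist_bound {G : Type*} [Group G] [MetricSpace G]
    (dinv : ∀ x y z : G, dist (x * y) (x * z) = dist y z) (a b : G) :
    dist 1 (a * b * a⁻¹) ≤ 2 * dist 1 a + dist 1 b := by
  have hinv : dist 1 a⁻¹ = dist 1 a := by
    have := dinv a 1 a⁻¹
    simpa [dist_comm] using this.symm
  calc dist 1 (a * b * a⁻¹)
      ≤ dist 1 a + dist a (a * b * a⁻¹) := dist_triangle _ _ _
    _ ≤ dist 1 a + (dist a (a * b) + dist (a * b) (a * b * a⁻¹)) := by
        gcongr; exact dist_triangle _ _ _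
    _ = dist 1 a + (dist 1 b + dist 1 a⁻¹) := by
        have h1 : dist a (a * b) = dist 1 b := by simpa using dinv a 1 b
        have h2 : dist (a * b) (a * b * a⁻¹) = dist 1 a⁻¹ := by
          simpa [mul_assoc] using dinv (a * b) 1 a⁻¹
        rw [h1, h2]
    _ = 2 * dist 1 a + dist 1 b := by rw [hinv]; ring

/-- the left and right cones are comparable:
`C^ℓ_{N,H}(α) ⊆ C^r_{N,H}(α+2)` and `C^r_{N,H}(α) ⊆ C^ℓ_{N,H}(α+2)`,
where the left cone uses the decomposition `p = nh` and the right cone uses `p = ℓm`. -/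
theorem stmt_7 {G : Type*} [Group G] [MetricSpace G]
    (N H : Subgroup G) (hNnormal : N.Normal)
    (dinv : ∀ x y z : G, dist (x * y) (x * z) = dist y z)
    (πN πH : G → G)
    (hdec : ∀ g : G, πN g ∈ N ∧ πH g ∈ H ∧ πN g * πH g = g)
    (huniq : ∀ n h : G, n ∈ N → h ∈ H → πN (n * h) = n ∧ πH (n * h) = h)
    (πN' πH' : G → G)
    (hdec' : ∀ g : G, πN' g ∈ N ∧ πH' g ∈ H ∧ πH' g * πN' g = g)
    (huniq' : ∀ h m : G, h ∈ H → m ∈ N → πH' (h * m) = h ∧ πN' (h * m) = m) :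
    ∀ α : ℝ, 0 ≤ α →
      ({p : G | dist 1 (πN p) ≤ α * dist 1 (πH p)}
        ⊆ {p : G | dist 1 (πN' p) ≤ (α + 2) * dist 1 (πH' p)}) ∧
      ({p : G | dist 1 (πN' p) ≤ α * dist 1 (πH' p)}
        ⊆ {p : G | dist 1 (πN p) ≤ (α + 2) * dist 1 (πH p)}) := by
  intro α hα
  constructor
  · intro p hp
    simp only [Set.mem_setOf_eq] at hp ⊢
    obtain ⟨hn, hh, hmul⟩ := hdec p
    set n := πN p; set h := πH p
    have hmem : h⁻¹ * n * h ∈ N := by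
      simpa using hNnormal.conj_mem n hn h⁻¹
    have hdec2 : h * (h⁻¹ * n * h) = p := by group; rw [← hmul]
    have hu := huniq' h (h⁻¹ * n * h) hh hmem
    rw [hdec2] at hu
    rw [hu.1, hu.2]
    have hb : dist 1 (h⁻¹ * n * h) ≤ 2 * dist 1 h⁻¹ + dist 1 n := by
      simpa using conj_dist_bound dinv h⁻¹ n
    have hinv : dist 1 h⁻¹ = dist 1 h := by
      have := dinv h 1 h⁻¹
      simpa [dist_comm] using this.symm
    rw [hinv] at hb
    calc dist 1 (h⁻¹ * n * h) ≤ 2 * dist 1 h + dist 1 n := hb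
      _ ≤ 2 * dist 1 h + α * dist 1 h := by gcongr
      _ = (α + 2) * dist 1 h := by ring
  · intro p hp
    simp only [Set.mem_setOf_eq] at hp ⊢
    obtain ⟨hm, hh, hmul⟩ := hdec' p
    set m := πN' p; set h := πH' p
    have hmem : h * m * h⁻¹ ∈ N := hNnormal.conj_mem m hm h
    have hdec2 : (h * m * h⁻¹) * h = p := by rw [← hmul]; group
    have hu := huniq (h * m * h⁻¹) h hmem hh
    rw [hdec2] at hu
    rw [hu.1, hu.2]
    calc dist 1 (h * m * h⁻¹) ≤ 2 * dist 1 h + dist 1 m := conj_dist_bound dinv h m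
      _ ≤ 2 * dist 1 h + α * dist 1 h := by gcongr
      _ = (α + 2) * dist 1 h := by ring
end

section
/- Let G = N ⋊ H be a metric Lie group with H one-dimensional, H = {exp(tV) : t ∈ ℝ}. For any α > 0, p ∈ G, and h = exp(tV) with t > 0, one has p·h·C⁺_{N,H}(α) ⊆ p·C⁺_{N,H}(α+2), where C⁺_{N,H}(α) = C_{N,H}(α) ∩ {g : π_H(g) = exp(sV), s ≥ 0}. Analogously for t < 0 and the cones C⁻. -/
/-- right-invariance-type property of the half cones in a metric group
`G = N ⋊ H` with `H = {exp(tV) : t ∈ ℝ}` one-dimensional: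
`p·h·C⁺_{N,H}(α) ⊆ p·C⁺_{N,H}(α+2)` for `h = exp(tV)`, `t > 0`, and analogously for
`t < 0` with the cones `C⁻`. -/
theorem stmt_9 {G : Type*} [Group G] [MetricSpace G]
    (N H : Subgroup G) (hNnormal : N.Normal)
    (dinv : ∀ x y z : G, dist (x * y) (x * z) = dist y z)
    (πN πH : G → G)
    (hdec : ∀ g : G, πN g ∈ N ∧ πH g ∈ H ∧ πN g * πH g = g)
    (huniq : ∀ n h : G, n ∈ N → h ∈ H → πN (n * h) = n ∧ πH (n * h) = h)
    (e : ℝ → G) (hhom : ∀ s t : ℝ, e (s + t) = e s * e t) (he0 : e 0 = 1)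
    (hH : (H : Set G) = Set.range e)
    (hde : ∀ t : ℝ, dist 1 (e t) = |t|) :
    ∀ α : ℝ, 0 < α → ∀ p : G, ∀ t : ℝ,
      (0 < t →
        (fun x => p * e t * x) ''
            {g : G | dist 1 (πN g) ≤ α * dist 1 (πH g) ∧ ∃ s : ℝ, 0 ≤ s ∧ πH g = e s}
          ⊆ (fun x => p * x) ''
            {g : G | dist 1 (πN g) ≤ (α + 2) * dist 1 (πH g) ∧
              ∃ s : ℝ, 0 ≤ s ∧ πH g = e s}) ∧
      (t < 0 →
        (fun x => p * e t * x) ''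
            {g : G | dist 1 (πN g) ≤ α * dist 1 (πH g) ∧ ∃ s : ℝ, s ≤ 0 ∧ πH g = e s}
          ⊆ (fun x => p * x) ''
            {g : G | dist 1 (πN g) ≤ (α + 2) * dist 1 (πH g) ∧
              ∃ s : ℝ, s ≤ 0 ∧ πH g = e s}) := by
  intro α hα p t
  -- auxiliary facts
  have hd1inv : ∀ x : G, dist 1 x⁻¹ = dist 1 x := by
    intro x
    have h := dinv x 1 x⁻¹
    simp only [mul_one, mul_inv_cancel] at h
    rw [← h, dist_comm]
  have conj : ∀ h n : G, dist 1 (h * n * h⁻¹) ≤ 2 * dist 1 h + dist 1 n := by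
    intro h n
    have h1 : dist h (h * n * h⁻¹) = dist 1 (n * h⁻¹) := by
      rw [mul_assoc]
      have := dinv h 1 (n * h⁻¹)
      rwa [mul_one] at this
    have h2 : dist n (n * h⁻¹) = dist 1 h⁻¹ := by
      have := dinv n 1 h⁻¹
      rwa [mul_one] at this
    calc dist 1 (h * n * h⁻¹) ≤ dist 1 h + dist h (h * n * h⁻¹) := dist_triangle _ _ _
      _ = dist 1 h + dist 1 (n * h⁻¹) := by rw [h1]
      _ ≤ dist 1 h + (dist 1 n + dist n (n * h⁻¹)) := by
          gcongr; exact dist_triangle _ _ _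
      _ = 2 * dist 1 h + dist 1 n := by rw [h2, hd1inv]; ring
  have main : ∀ s : ℝ, |t + s| = |t| + |s| → ∀ g : G,
      dist 1 (πN g) ≤ α * dist 1 (πH g) → πH g = e s →
      dist 1 (πN (e t * g)) ≤ (α + 2) * dist 1 (πH (e t * g)) ∧
        πH (e t * g) = e (t + s) := by
    intro s habs g hg hs
    obtain ⟨hnN, _, hmul⟩ := hdec g
    set n := πN g with hn
    have hgform : e t * g = (e t * n * (e t)⁻¹) * e (t + s) := by
      rw [hhom, ← hmul, hs]
      group
    have hcN : e t * n * (e t)⁻¹ ∈ N := hNnormal.conj_mem n hnN (e t)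
    have heH : e (t + s) ∈ H := by
      have : e (t + s) ∈ (H : Set G) := by rw [hH]; exact ⟨t + s, rfl⟩
      exact this
    obtain ⟨huN, huH⟩ := huniq _ _ hcN heH
    rw [hgform, huN, huH]
    refine ⟨?_, rfl⟩
    rw [hde, habs]
    have h1 : dist 1 (e t * n * (e t)⁻¹) ≤ 2 * |t| + dist 1 n := by
      have := conj (e t) n
      rwa [hde] at this
    have h2 : dist 1 n ≤ α * |s| := by
      rw [hs, hde] at hg
      exact hg
    nlinarith [abs_nonneg t, abs_nonneg s]
  constructor
  · -- positive case
    intro ht x hx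
    obtain ⟨g, ⟨hg, s, hs0, hsg⟩, rfl⟩ := hx
    have habs : |t + s| = |t| + |s| := by
      rw [abs_of_nonneg (by linarith), abs_of_pos ht, abs_of_nonneg hs0]
    obtain ⟨hb, hh⟩ := main s habs g hg hsg
    exact ⟨e t * g, ⟨hb, t + s, by linarith, hh⟩, by simp [mul_assoc]⟩
  · -- negative case
    intro ht x hx
    obtain ⟨g, ⟨hg, s, hs0, hsg⟩, rfl⟩ := hx
    have habs : |t + s| = |t| + |s| := by
      rw [abs_of_nonpos (by linarith), abs_of_neg ht, abs_of_nonpos hs0]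
      ring
    obtain ⟨hb, hh⟩ := main s habs g hg hsg
    exact ⟨e t * g, ⟨hb, t + s, by linarith, hh⟩, by simp [mul_assoc]⟩
end

section
/- Let (G = N ⋊ H, d) be a metric group, φ : N → H, m ∈ N, p = mφ(m). If d(φ(m), φ(n)) ≤ L d(1, π_N(p⁻¹q)) for all q = nφ(n) ∈ Γ_φ, then d(p, q) ≤ (1+L) d(1, π_N(p⁻¹q)) for all q ∈ Γ_φ. Conversely, if d(p,q) ≤ L̄ d(1, π_N(p⁻¹q)) for all q ∈ Γ_φ, then d(φ(m), φ(n)) ≤ (1+L̄) d(1, π_N(p⁻¹q)). -/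
/-- with `p = mφ(m)` and `q = nφ(n)`, the intrinsic-Lipschitz estimate on
the components implies the graph-distance estimate with constant `1+L`, and conversely. -/
theorem stmt_12 {G : Type*} [Group G] [MetricSpace G]
    (N H : Subgroup G) (hNnormal : N.Normal)
    (dinv : ∀ x y z : G, dist (x * y) (x * z) = dist y z)
    (πN πH : G → G)
    (hdec : ∀ g : G, πN g ∈ N ∧ πH g ∈ H ∧ πN g * πH g = g)
    (huniq : ∀ n h : G, n ∈ N → h ∈ H → πN (n * h) = n ∧ πH (n * h) = h)
    (φ : G → G) (hφ : ∀ n ∈ (N : Set G), φ n ∈ H)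
    (m : G) (hm : m ∈ N) :
    (∀ L : ℝ,
      (∀ n ∈ (N : Set G),
        dist (φ m) (φ n) ≤ L * dist 1 (πN ((m * φ m)⁻¹ * (n * φ n)))) →
      ∀ n ∈ (N : Set G),
        dist (m * φ m) (n * φ n) ≤ (1 + L) * dist 1 (πN ((m * φ m)⁻¹ * (n * φ n)))) ∧
    (∀ Lbar : ℝ,
      (∀ n ∈ (N : Set G),
        dist (m * φ m) (n * φ n) ≤ Lbar * dist 1 (πN ((m * φ m)⁻¹ * (n * φ n)))) →
      ∀ n ∈ (N : Set G),
        dist (φ m) (φ n) ≤ (1 + Lbar) * dist 1 (πN ((m * φ m)⁻¹ * (n * φ n)))) := by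
  -- identify the N-component of p⁻¹q
  have key : ∀ n ∈ (N : Set G),
      πN ((m * φ m)⁻¹ * (n * φ n)) = (φ m)⁻¹ * (m⁻¹ * n) * φ m := by
    intro n hn
    have hw : (φ m)⁻¹ * (m⁻¹ * n) * φ m ∈ N := by
      have h1 : m⁻¹ * n ∈ N := mul_mem (inv_mem hm) hn
      simpa [mul_assoc] using hNnormal.conj_mem _ h1 ((φ m)⁻¹)
    have hh : (φ m)⁻¹ * φ n ∈ H := mul_mem (inv_mem (hφ m hm)) (hφ n hn)
    have heq : ((φ m)⁻¹ * (m⁻¹ * n) * φ m) * ((φ m)⁻¹ * φ n)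
        = (m * φ m)⁻¹ * (n * φ n) := by group
    have h2 := (huniq _ _ hw hh).1
    rw [heq] at h2
    exact h2
  -- basic distance identities
  have dpq : ∀ n : G, dist (m * φ m) (n * φ n)
      = dist 1 (((φ m)⁻¹ * (m⁻¹ * n) * φ m) * ((φ m)⁻¹ * φ n)) := by
    intro n
    have := dinv (m * φ m) 1 (((φ m)⁻¹ * (m⁻¹ * n) * φ m) * ((φ m)⁻¹ * φ n))
    rw [← this, mul_one]
    congr 1
    group
  have dφ : ∀ n : G, dist (φ m) (φ n) = dist 1 ((φ m)⁻¹ * φ n) := by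
    intro n
    have := dinv (φ m) 1 ((φ m)⁻¹ * φ n)
    rw [← this, mul_one, mul_inv_cancel_left]
  constructor
  · intro L hL n hn
    rw [key n hn] at *
    set w := (φ m)⁻¹ * (m⁻¹ * n) * φ m
    set h := (φ m)⁻¹ * φ n
    have h1 : dist 1 (w * h) ≤ dist 1 w + dist w (w * h) := dist_triangle _ _ _
    have h2 : dist w (w * h) = dist 1 h := by
      have := dinv w 1 h; rwa [mul_one] at this
    have h3 := hL n hn
    rw [key n hn] at h3
    rw [dφ n] at h3
    rw [dpq n]
    calc dist 1 (w * h) ≤ dist 1 w + dist 1 h := by rw [← h2]; exact h1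
    _ ≤ dist 1 w + L * dist 1 w := by linarith
    _ = (1 + L) * dist 1 w := by ring
  · intro L hL n hn
    rw [key n hn] at *
    set w := (φ m)⁻¹ * (m⁻¹ * n) * φ m
    set h := (φ m)⁻¹ * φ n
    have h1 : dist 1 h ≤ dist 1 w⁻¹ + dist w⁻¹ h := dist_triangle _ _ _
    have h2 : dist w⁻¹ h = dist 1 (w * h) := by
      have := dinv w w⁻¹ h; rw [mul_inv_cancel] at this; rw [← this]
    have h2' : dist 1 w⁻¹ = dist 1 w := by
      have := dinv w 1 w⁻¹; rw [mul_one, mul_inv_cancel] at this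
      rw [← this, dist_comm]
    have h3 := hL n hn
    rw [key n hn, dpq n] at h3
    rw [dφ n]
    calc dist 1 h ≤ dist 1 w + dist 1 (w * h) := by rw [← h2, ← h2']; exact h1
    _ ≤ dist 1 w + L * dist 1 w := by linarith
    _ = (1 + L) * dist 1 w := by ring
end

section
/- Let (G = N ⋊ H, d) be a metric group and let φ_h : N → H (h ∈ ℕ) be intrinsically L-Lipschitz maps converging pointwise to φ : N → H. Then φ is intrinsically L-Lipschitz, i.e. d(φ(n), φ(m)) ≤ L d(1, C_{φ(m)⁻¹}(m⁻¹n)) for all n, m ∈ N. -/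
/-- a pointwise limit of intrinsically `L`-Lipschitz maps `φ_h : N → H`
is intrinsically `L`-Lipschitz:
`d(φ(n), φ(m)) ≤ L d(1, C_{φ(m)⁻¹}(m⁻¹n))` for all `n, m ∈ N`. -/
theorem stmt_13 {G : Type*} [Group G] [MetricSpace G]
    (N H : Subgroup G) (hNnormal : N.Normal)
    (dinv : ∀ x y z : G, dist (x * y) (x * z) = dist y z)
    (L : ℝ) (φs : ℕ → G → G) (φ : G → G)
    (hφs : ∀ j : ℕ, ∀ n ∈ (N : Set G), φs j n ∈ H)
    (hφ : ∀ n ∈ (N : Set G), φ n ∈ H)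
    (hLip : ∀ j : ℕ, ∀ n ∈ (N : Set G), ∀ m ∈ (N : Set G),
      dist (φs j n) (φs j m) ≤ L * dist 1 ((φs j m)⁻¹ * (m⁻¹ * n) * φs j m))
    (hconv : ∀ n ∈ (N : Set G),
      Filter.Tendsto (fun j => φs j n) Filter.atTop (nhds (φ n))) :
    ∀ n ∈ (N : Set G), ∀ m ∈ (N : Set G),
      dist (φ n) (φ m) ≤ L * dist 1 ((φ m)⁻¹ * (m⁻¹ * n) * φ m) := by
  -- key rewriting: dist 1 (b⁻¹ * a * b) = dist b (a * b)
  have key : ∀ a b : G, dist 1 (b⁻¹ * a * b) = dist b (a * b) := by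
    intro a b
    have := dinv b 1 (b⁻¹ * a * b)
    rw [mul_one] at this
    have h2 : b * (b⁻¹ * a * b) = a * b := by group
    rw [h2] at this
    exact this.symm
  intro n hn m hm
  -- sequences
  have hF : Filter.Tendsto (fun j => dist (φs j n) (φs j m)) Filter.atTop
      (nhds (dist (φ n) (φ m))) := (hconv n hn).dist (hconv m hm)
  have hmul : Filter.Tendsto (fun j => (m⁻¹ * n) * φs j m) Filter.atTop
      (nhds ((m⁻¹ * n) * φ m)) := by
    rw [tendsto_iff_dist_tendsto_zero]
    have : (fun j => dist ((m⁻¹ * n) * φs j m) ((m⁻¹ * n) * φ m))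
        = fun j => dist (φs j m) (φ m) := by
      funext j; exact dinv _ _ _
    rw [this]
    exact tendsto_iff_dist_tendsto_zero.1 (hconv m hm)
  have hG : Filter.Tendsto (fun j => L * dist (φs j m) ((m⁻¹ * n) * φs j m))
      Filter.atTop (nhds (L * dist (φ m) ((m⁻¹ * n) * φ m))) :=
    Filter.Tendsto.const_mul L ((hconv m hm).dist hmul)
  have hle : ∀ j, dist (φs j n) (φs j m)
      ≤ L * dist (φs j m) ((m⁻¹ * n) * φs j m) := by
    intro j
    have := hLip j n hn m hm
    rwa [key] at this
  rw [key]
  exact le_of_tendsto_of_tendsto' hF hG hle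
end

section
/- Let (G = N ⋊ H, d) be a metric group, α ∈ (0,1), and φ : N → H intrinsically Lipschitz with constant ≤ α. Then for any fixed q ∈ Γ_φ, the restriction of π_H to Γ_{φ_{q⁻¹}} is α/(1−α)-Lipschitz at 1: d(1, π_H(p)) ≤ (α/(1−α)) d(1, p) for all p ∈ Γ_{φ_{q⁻¹}}. -/
/-- if `φ : N → H` is intrinsically Lipschitz with constant `≤ α ∈ (0,1)`,
then for any `q ∈ Γ_φ` the projection `π_H` restricted to `Γ_{φ_{q⁻¹}} = q⁻¹Γ_φ` is
`α/(1−α)`-Lipschitz at `1`. -/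
theorem stmt_14 {G : Type*} [Group G] [MetricSpace G]
    (N H : Subgroup G) (hNnormal : N.Normal)
    (dinv : ∀ x y z : G, dist (x * y) (x * z) = dist y z)
    (πN πH : G → G)
    (hdec : ∀ g : G, πN g ∈ N ∧ πH g ∈ H ∧ πN g * πH g = g)
    (huniq : ∀ n h : G, n ∈ N → h ∈ H → πN (n * h) = n ∧ πH (n * h) = h)
    (α : ℝ) (hα0 : 0 < α) (hα1 : α < 1)
    (φ : G → G) (hφ : ∀ n ∈ (N : Set G), φ n ∈ H)
    (hLip : ∀ x ∈ {x : G | ∃ n ∈ (N : Set G), x = n * φ n},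
            ∀ x' ∈ {x : G | ∃ n ∈ (N : Set G), x = n * φ n},
      dist 1 (πH (x⁻¹ * x')) ≤ α * dist 1 (πN (x⁻¹ * x')))
    (q : G) (hq : q ∈ {x : G | ∃ n ∈ (N : Set G), x = n * φ n}) :
    ∀ p ∈ (fun x => q⁻¹ * x) '' {x : G | ∃ n ∈ (N : Set G), x = n * φ n},
      dist 1 (πH p) ≤ (α / (1 - α)) * dist 1 p := by
  rintro p ⟨x, hx, rfl⟩
  set p := q⁻¹ * x with hp
  have key := hLip q hq x hx
  have hN : dist 1 (πN p) ≤ dist 1 p + dist 1 (πH p) := by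
    have h1 : dist p (πN p) = dist 1 (πH p) := by
      have hd := (hdec p).2.2
      calc dist p (πN p) = dist (πN p * πH p) (πN p * 1) := by rw [mul_one, hd]
        _ = dist (πH p) 1 := dinv _ _ _
        _ = dist 1 (πH p) := dist_comm _ _
    calc dist 1 (πN p) ≤ dist 1 p + dist p (πN p) := dist_triangle _ _ _
      _ = dist 1 p + dist 1 (πH p) := by rw [h1]
  have h2 : dist 1 (πH p) ≤ α * (dist 1 p + dist 1 (πH p)) := by
    calc dist 1 (πH p) ≤ α * dist 1 (πN p) := key
      _ ≤ α * (dist 1 p + dist 1 (πH p)) := by nlinarith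
  have h3 : (1 - α) * dist 1 (πH p) ≤ α * dist 1 p := by nlinarith
  rw [div_mul_eq_mul_div, le_div_iff₀ (by linarith)]
  linarith
end

section
/- Let (G = M ⋉ W, d) be a metric group with W normal, and φ : M → W a function. Then φ is intrinsically L-Lipschitz if and only if the graph map Φ : (M, d) → (G, d), Φ(m) = m φ(m), is metrically Lipschitz; quantitatively, intrinsic L-Lipschitz implies d(Φ(m), Φ(k)) ≤ (1+L) d(m,k), and Φ being L̃-Lipschitz implies φ is intrinsically (1+L̃)-Lipschitz. Key identity: for p = mφ(m) and a ∈ M, φ_{p⁻¹}(a) = C_{a⁻¹}(φ(m)⁻¹) φ(ma), and with a = m⁻¹k, Φ(m)⁻¹Φ(k) = a φ_{p⁻¹}(a). -/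
/-- The translated function `φ_q(a) = (π_W(q⁻¹a))⁻¹ φ(π_M(q⁻¹a))` for the splitting
`G = M ⋉ W` with `W` normal. -/
def trfun {G : Type*} [Group G] (πM πW : G → G) (q : G) (φ : G → G) : G → G :=
  fun a => (πW (q⁻¹ * a))⁻¹ * φ (πM (q⁻¹ * a))

/-- for `G = M ⋉ W` with `W` normal, `φ : M → W` is intrinsically
`L`-Lipschitz iff the graph map `Φ(m) = mφ(m)` is metrically Lipschitz, with the
quantitative constants `1+L` and `1+L̃`, together with the key identities
`φ_{p⁻¹}(a) = C_{a⁻¹}(φ(m)⁻¹) φ(ma)` and `Φ(m)⁻¹Φ(k) = a φ_{p⁻¹}(a)` for `a = m⁻¹k`. -/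
theorem stmt_17 {G : Type*} [Group G] [MetricSpace G]
    (M W : Subgroup G) (hWnormal : W.Normal)
    (dinv : ∀ x y z : G, dist (x * y) (x * z) = dist y z)
    (πM πW : G → G)
    (hdec : ∀ g : G, πM g ∈ M ∧ πW g ∈ W ∧ πM g * πW g = g)
    (huniq : ∀ m w : G, m ∈ M → w ∈ W → πM (m * w) = m ∧ πW (m * w) = w)
    (φ : G → G) (hφ : ∀ m ∈ (M : Set G), φ m ∈ W) :
    (∀ m ∈ (M : Set G), ∀ a ∈ (M : Set G),
      trfun πM πW (m * φ m)⁻¹ φ a = a⁻¹ * (φ m)⁻¹ * a * φ (m * a)) ∧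
    (∀ m ∈ (M : Set G), ∀ k ∈ (M : Set G),
      (m * φ m)⁻¹ * (k * φ k) = (m⁻¹ * k) * trfun πM πW (m * φ m)⁻¹ φ (m⁻¹ * k)) ∧
    (∀ L : ℝ,
      (∀ m ∈ (M : Set G), ∀ a ∈ (M : Set G),
        dist 1 (trfun πM πW (m * φ m)⁻¹ φ a) ≤ L * dist 1 a) →
      ∀ m ∈ (M : Set G), ∀ k ∈ (M : Set G),
        dist (m * φ m) (k * φ k) ≤ (1 + L) * dist m k) ∧
    (∀ Ltilde : ℝ,
      (∀ m ∈ (M : Set G), ∀ k ∈ (M : Set G),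
        dist (m * φ m) (k * φ k) ≤ Ltilde * dist m k) →
      ∀ m ∈ (M : Set G), ∀ a ∈ (M : Set G),
        dist 1 (trfun πM πW (m * φ m)⁻¹ φ a) ≤ (1 + Ltilde) * dist 1 a) := by
  have key : ∀ m ∈ (M : Set G), ∀ a ∈ (M : Set G),
      trfun πM πW (m * φ m)⁻¹ φ a = a⁻¹ * (φ m)⁻¹ * a * φ (m * a) := by
    intro m hm a ha
    have hW : a⁻¹ * φ m * a ∈ W := by
      have := hWnormal.conj_mem (φ m) (hφ m hm) a⁻¹
      simpa using this
    have hM : m * a ∈ M := M.mul_mem hm ha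
    have hrw : ((m * φ m)⁻¹)⁻¹ * a = (m * a) * (a⁻¹ * φ m * a) := by group
    have h1 := huniq (m * a) (a⁻¹ * φ m * a) hM hW
    simp only [trfun, hrw, h1.1, h1.2]
    group
  have key2 : ∀ m ∈ (M : Set G), ∀ k ∈ (M : Set G),
      (m * φ m)⁻¹ * (k * φ k) = (m⁻¹ * k) * trfun πM πW (m * φ m)⁻¹ φ (m⁻¹ * k) := by
    intro m hm k hk
    have ha : m⁻¹ * k ∈ M := M.mul_mem (M.inv_mem hm) hk
    rw [key m hm (m⁻¹ * k) ha]
    have : m * (m⁻¹ * k) = k := by group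
    rw [this]
    group
  have d1 : ∀ x : G, dist 1 x = dist x⁻¹ 1 := by
    intro x
    have := dinv x⁻¹ 1 x
    simpa using this.symm
  refine ⟨key, key2, ?_, ?_⟩
  · intro L hL m hm k hk
    have ha : m⁻¹ * k ∈ M := M.mul_mem (M.inv_mem hm) hk
    set a := m⁻¹ * k with hadef
    set t := trfun πM πW (m * φ m)⁻¹ φ a with htdef
    have h0 : dist (m * φ m) (k * φ k) = dist 1 (a * t) := by
      have := dinv (m * φ m) 1 ((m * φ m)⁻¹ * (k * φ k))
      rw [mul_one, mul_inv_cancel_left, key2 m hm k hk] at this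
      exact this
    have h1 : dist 1 (a * t) ≤ dist 1 a + dist a (a * t) := dist_triangle _ _ _
    have h2 : dist a (a * t) = dist 1 t := by
      have := dinv a 1 t
      simpa using this
    have h3 : dist 1 t ≤ L * dist 1 a := hL m hm a ha
    have h4 : dist m k = dist 1 a := by
      have := dinv m 1 (m⁻¹ * k)
      rw [mul_one, mul_inv_cancel_left] at this
      exact this
    rw [h0, h4]
    calc dist 1 (a * t) ≤ dist 1 a + dist 1 t := by rw [← h2]; exact h1
      _ ≤ dist 1 a + L * dist 1 a := by linarith
      _ = (1 + L) * dist 1 a := by ring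
  · intro L hL m hm a ha
    set t := trfun πM πW (m * φ m)⁻¹ φ a with htdef
    have hM : m * a ∈ M := M.mul_mem hm ha
    have hk : (m * φ m)⁻¹ * ((m * a) * φ (m * a)) = a * t := by
      have := key2 m hm (m * a) hM
      rw [this]
      have h : m⁻¹ * (m * a) = a := by group
      rw [h]
    have h0 : dist (m * φ m) ((m * a) * φ (m * a)) = dist 1 (a * t) := by
      have := dinv (m * φ m) 1 ((m * φ m)⁻¹ * ((m * a) * φ (m * a)))
      rw [mul_one, mul_inv_cancel_left, hk] at this
      exact this
    have hma : dist m (m * a) = dist 1 a := by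
      have := dinv m 1 a
      rw [mul_one] at this
      exact this
    have h1 : dist 1 (a * t) ≤ L * dist 1 a := by
      rw [← h0]
      calc dist (m * φ m) ((m * a) * φ (m * a)) ≤ L * dist m (m * a) := hL m hm (m * a) hM
        _ = L * dist 1 a := by rw [hma]
    have h2 : dist 1 t ≤ dist 1 a⁻¹ + dist a⁻¹ t := dist_triangle _ _ _
    have h3 : dist a⁻¹ t = dist 1 (a * t) := by
      have := dinv a a⁻¹ t
      simpa using this.symm
    have h4 : dist 1 a⁻¹ = dist 1 a := by
      have := dinv a 1 a⁻¹
      simp at this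
      rw [← this, dist_comm]
    calc dist 1 t ≤ dist 1 a⁻¹ + dist a⁻¹ t := h2
      _ = dist 1 a + dist 1 (a * t) := by rw [h3, h4]
      _ ≤ dist 1 a + L * dist 1 a := by linarith
      _ = (1 + L) * dist 1 a := by ring
end
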